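/- Let α1 be a Perron number of degree 2 with conjugate α2, and suppose m1 > m2 are integers with α1^{m1} α2^{m2} = 1. Then this leads to a contradiction; i.e., every relation α1^{m1} α2^{m2} = 1 with integer exponents has m1 = m2. -/

import Mathlib

/-!
By Vieta, `α1 * α2` is the constant coefficient of the minimal polynomial, an integer. A relation
`α1 ^ m1 * α2 ^ m2 = 1` therefore makes `α1 ^ (m1 - m2)` rational, and since `α2` is a root of
the minimal polynomial of `α1` over `ℚ`, also `α2 ^ (m1 - m2)` equals that rational number.
Taking absolute values, `m1 ≠ m2` would force `|α2| = α1`.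
-/

/-- `α1` is a Perron number of degree 2 with (real) conjugate `α2`. -/
def IsPerronQuadratic (α1 α2 : ℝ) : Prop :=
  1 < α1 ∧ |α2| < α1 ∧
  ∃ p : Polynomial ℤ, p.Monic ∧ Irreducible p ∧ p.natDegree = 2 ∧
    (p.map (Int.castRingHom ℂ)).roots = {(α1 : ℂ), (α2 : ℂ)}

open Polynomial

theorem Polynomial.Monic.coeff_zero_eq_mul_of_roots_eq_pair {R : Type*} [CommRing R] [IsDomain R]
    {f : R[X]} (hm : f.Monic) (hdeg : f.natDegree = 2) {a b : R} (hroots : f.roots = {a, b}) :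
    f.coeff 0 = a * b := by
  have hs : f.Splits := splits_iff_card_roots.mpr (by simp [hroots, hdeg])
  simp [hs.coeff_zero_eq_prod_roots_of_monic hm, hdeg, hroots]

theorem Polynomial.Monic.minpoly_rat_eq_map {L : Type*} [Field L] [CharZero L] {p : ℤ[X]}
    (hm : p.Monic) (hirr : Irreducible p) {z : L} (hz : aeval z p = 0) :
    minpoly ℚ z = p.map (Int.castRingHom ℚ) :=
  (minpoly.eq_of_irreducible_of_monic
    ((IsPrimitive.Int.irreducible_iff_irreducible_map_cast hm.isPrimitive).mp hirr)
    (by rwa [← algebraMap_int_eq, aeval_map_algebraMap]) (hm.map _)).symm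

theorem zpow_eq_algebraMap_of_aeval_minpoly_eq_zero {K L : Type*} [Field K] [Field L] [Algebra K L]
    {z w : L} (hw : aeval w (minpoly K z) = 0) {k : ℤ} {q : K}
    (hz : z ^ k = algebraMap K L q) : w ^ k = algebraMap K L q := by
  suffices ∀ n : ℕ, ∀ r : K, z ^ n = algebraMap K L r → w ^ n = algebraMap K L r by
    obtain ⟨n, rfl | rfl⟩ := k.eq_nat_or_neg
    · simpa using this n q (by simpa using hz)
    · rw [zpow_neg, zpow_natCast, this n q⁻¹ (by rw [map_inv₀, ← hz, zpow_neg, zpow_natCast,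
        inv_inv]), map_inv₀, inv_inv]
  intro n r h
  have hg : aeval z (X ^ n - C r) = 0 := by simp [h]
  have := aeval_eq_zero_of_dvd_aeval_eq_zero (minpoly.dvd K z hg) hw
  simpa [sub_eq_zero] using this

theorem zpow_sub_eq_inv_zpow_mul_of_zpow_mul_zpow_eq_one {K : Type*} [Field K] {a b : K}
    (ha : a ≠ 0) {m n : ℤ} (h : a ^ m * b ^ n = 1) : a ^ (m - n) = ((a * b) ^ n)⁻¹ := by
  have hb : b ^ n ≠ 0 := right_ne_zero_of_mul_eq_one h
  rw [zpow_sub₀ ha, mul_zpow]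
  field_simp
  linear_combination h

/-- For a quadratic Perron number `α1` with conjugate `α2`, every relation
`α1^m1 · α2^m2 = 1` with integer exponents has `m1 = m2`. -/
theorem quadratic_relations_have_equal_exponents
    (α1 α2 : ℝ) (h : IsPerronQuadratic α1 α2) :
    ∀ m1 m2 : ℤ, α1 ^ m1 * α2 ^ m2 = 1 → m1 = m2 := by
  obtain ⟨hα1, hα2, p, hmon, hirr, hdeg, hroots⟩ := h
  intro m1 m2 hrel
  by_contra hne
  have hvieta : (α1 : ℂ) * α2 = (p.coeff 0 : ℂ) := by
    rw [← (hmon.map _).coeff_zero_eq_mul_of_roots_eq_pair (by rwa [hmon.natDegree_map]) hroots,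
      coeff_map, eq_intCast]
  rw [← algebraMap_int_eq] at hroots
  have hroot : ∀ z ∈ p.aroots ℂ, aeval z p = 0 := fun z hz => (mem_aroots.1 hz).2
  have hconj : aeval (α2 : ℂ) (minpoly ℚ (α1 : ℂ)) = 0 := by
    rw [hmon.minpoly_rat_eq_map hirr (hroot _ (by simp [hroots])),
      ← algebraMap_int_eq, aeval_map_algebraMap]
    exact hroot _ (by simp [hroots])
  have hpow : (α1 : ℂ) ^ (m1 - m2) = algebraMap ℚ ℂ (((p.coeff 0 : ℚ) ^ m2)⁻¹) := by
    rw [zpow_sub_eq_inv_zpow_mul_of_zpow_mul_zpow_eq_one (b := (α2 : ℂ)) (by norm_cast; linarith)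
      (by exact_mod_cast hrel), hvieta]
    simp
  have hconj_pow : α2 ^ (m1 - m2) = α1 ^ (m1 - m2) := by
    exact_mod_cast (zpow_eq_algebraMap_of_aeval_minpoly_eq_zero hconj hpow).trans hpow.symm
  have : |α2| = α1 := (zpow_left_inj₀ (abs_nonneg _) (by linarith) (sub_ne_zero.2 hne)).1
    (by rw [← abs_zpow, hconj_pow, abs_of_pos (by positivity)])
  linarith
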